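/- For 0 < α < π/4, set θ = π/4 − α, and consider the ILS problem with A the 2×1 matrix (cos θ, sin θ)ᵀ, b = (1, 1)ᵀ, and J = diag(1, −1). Then AᵀJA = cos(2θ) > 0, the solution is the scalar x = 1/(cos θ + sin θ), and the spectral norm of the Jacobian matrix of the solution with respect to A satisfies ‖M₁ − M₂‖₂ = 2^{-1/2}·sec²(α); consequently the condition number χ = (‖A‖_F/‖x‖₂)·‖M₁ − M₂‖₂ equals sec(α). -/

import Mathlib

open Matrix

/-- Euclidean (ℓ²) norm of a vector. -/
noncomputable def eNorm {p : Type*} [Fintype p] (v : p → ℝ) : ℝ :=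
  Real.sqrt (∑ i, (v i) ^ 2)

/-- Frobenius norm of a matrix. -/
noncomputable def frobNorm {p q : Type*} [Fintype p] [Fintype q]
    (M : Matrix p q ℝ) : ℝ :=
  Real.sqrt (∑ i, ∑ j, (M i j) ^ 2)

/-- Spectral (ℓ² operator) norm of a matrix. -/
noncomputable def specNorm {p q : Type*} [Fintype p] [Fintype q] [DecidableEq q]
    (M : Matrix p q ℝ) : ℝ :=
  ‖LinearMap.toContinuousLinearMap (Matrix.toEuclideanLin M)‖

/-- Solution of the indefinite least squares problem: `x = (AᵀJA)⁻¹AᵀJb`. -/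
noncomputable def ilsX {m n : ℕ} (A : Matrix (Fin m) (Fin n) ℝ)
    (J : Matrix (Fin m) (Fin m) ℝ) (b : Fin m → ℝ) : Fin n → ℝ :=
  ((Aᵀ * J * A)⁻¹ * Aᵀ * J) *ᵥ b

/-- Residual of the indefinite least squares problem: `r = b - Ax`. -/
noncomputable def ilsR {m n : ℕ} (A : Matrix (Fin m) (Fin n) ℝ)
    (J : Matrix (Fin m) (Fin m) ℝ) (b : Fin m → ℝ) : Fin m → ℝ :=
  b - A *ᵥ (ilsX A J b)

/-- `M₁ = (AᵀJA)⁻¹ ⊗ (Jr)ᵀ`, realized as an `n × (n·m)` matrix whose column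
index `(j, k)` corresponds to entry `(k, j)` of the perturbation matrix. -/
noncomputable def ilsM1 {m n : ℕ} (A : Matrix (Fin m) (Fin n) ℝ)
    (J : Matrix (Fin m) (Fin m) ℝ) (b : Fin m → ℝ) :
    Matrix (Fin n) (Fin n × Fin m) ℝ :=
  Matrix.of fun i jk => (Aᵀ * J * A)⁻¹ i jk.1 * (J *ᵥ (ilsR A J b)) jk.2

/-- `M₂ = xᵀ ⊗ (AᵀJA)⁻¹AᵀJ`, realized as an `n × (n·m)` matrix. -/
noncomputable def ilsM2 {m n : ℕ} (A : Matrix (Fin m) (Fin n) ℝ)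
    (J : Matrix (Fin m) (Fin m) ℝ) (b : Fin m → ℝ) :
    Matrix (Fin n) (Fin n × Fin m) ℝ :=
  Matrix.of fun i jk => (ilsX A J b) jk.1 * ((Aᵀ * J * A)⁻¹ * Aᵀ * J) i jk.2

/-- The 2×1 example matrix `A = (cos θ, sin θ)ᵀ`. -/
noncomputable def exA (θ : ℝ) : Matrix (Fin 2) (Fin 1) ℝ := !![Real.cos θ; Real.sin θ]

/-- The signature matrix `J = diag(1, −1)`. -/
noncomputable def exJ : Matrix (Fin 2) (Fin 2) ℝ := !![1, 0; 0, -1]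

/-- The right-hand side `b = (1, 1)ᵀ`. -/
noncomputable def exb : Fin 2 → ℝ := ![1, 1]

/-! With a single unknown the matrix `AᵀJA` is the scalar
`cos 2θ = (cos θ - sin θ)(cos θ + sin θ)`, so everything is explicit: `x = 1/(cos θ + sin θ)`,
`r = (sin θ, cos θ)/(cos θ + sin θ)`, and `M₁ - M₂` is the `1 × 2` row with both entries
`-(cos θ + sin θ)⁻²`. A one-row matrix has spectral norm equal to the Euclidean norm of its row,
here `√2 (cos θ + sin θ)⁻²`, and `cos θ + sin θ = √2 cos α` for `θ = π/4 - α`. -/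

open Real

lemma eNorm_eq_norm_toLp {p : Type*} [Fintype p] (v : p → ℝ) :
    eNorm v = ‖WithLp.toLp 2 v‖ := by
  simp [eNorm, EuclideanSpace.norm_eq]

lemma specNorm_replicateRow {q : Type*} [Fintype q] [DecidableEq q] (v : q → ℝ) :
    specNorm (Matrix.replicateRow (Fin 1) v) = eNorm v := by
  -- `ℝ ≃ₗᵢ EuclideanSpace ℝ (Fin 1)` is the `repr` of the one-vector orthonormal basis.
  have hM : LinearMap.toContinuousLinearMap
      (Matrix.toEuclideanLin (Matrix.replicateRow (Fin 1) v)) =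
      (OrthonormalBasis.singleton (Fin 1) ℝ).repr.toLinearIsometry.toContinuousLinearMap.comp
        (innerSL ℝ (WithLp.toLp 2 v)) := by
    ext x i
    fin_cases i
    simp [Matrix.mulVec, dotProduct, PiLp.inner_apply, mul_comm]
  rw [specNorm, hM, eNorm_eq_norm_toLp, ← innerSL_apply_norm ℝ (WithLp.toLp 2 v)]
  exact LinearIsometry.norm_toContinuousLinearMap_comp _

lemma eNorm_const {p : Type*} [Fintype p] (t : ℝ) :
    eNorm (fun _ : p => t) = √(Fintype.card p) * |t| := by
  rw [eNorm, Finset.sum_const, Finset.card_univ, nsmul_eq_mul, sqrt_mul (by positivity),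
    sqrt_sq_eq_abs]

lemma eNorm_fin_one (a : ℝ) : eNorm ![a] = |a| := by
  simp [eNorm, sqrt_sq_eq_abs]

lemma inv_of_fin_one (a : ℝ) : (!![a] : Matrix (Fin 1) (Fin 1) ℝ)⁻¹ = !![a⁻¹] := by
  rw [Matrix.inv_def, Matrix.adjugate_fin_one, Matrix.det_fin_one_of, Ring.inverse_eq_inv]
  ext i j
  fin_cases i; fin_cases j; simp

lemma cos_two_mul_pi_div_four_sub (α : ℝ) : cos (2 * (π / 4 - α)) = sin (2 * α) := by
  rw [← cos_pi_div_two_sub]; ring_nf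

lemma cos_add_sin_pi_div_four_sub (α : ℝ) :
    cos (π / 4 - α) + sin (π / 4 - α) = √2 * cos α := by
  rw [cos_sub, sin_sub, cos_pi_div_four, sin_pi_div_four]; ring

lemma cos_two_mul_eq_mul (θ : ℝ) : cos (2 * θ) = (cos θ - sin θ) * (cos θ + sin θ) := by
  rw [cos_two_mul']; ring

section Example

variable (θ : ℝ)

local notation "c" => cos θ
local notation "s" => sin θ

lemma exA_gram : (exA θ)ᵀ * exJ * exA θ = !![cos (2 * θ)] := by
  ext i j
  fin_cases i; fin_cases j
  simp [exA, exJ, Matrix.mul_apply, Fin.sum_univ_two, cos_two_mul', sq]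
  ring

lemma exA_pinv :
    ((exA θ)ᵀ * exJ * exA θ)⁻¹ * (exA θ)ᵀ * exJ = !![c / cos (2 * θ), -(s / cos (2 * θ))] := by
  rw [exA_gram, inv_of_fin_one]
  ext i j
  fin_cases i; fin_cases j <;>
    simp [exA, exJ, Matrix.mul_apply, Matrix.vecMul, dotProduct, Fin.sum_univ_two, div_eq_inv_mul]

lemma frobNorm_exA : frobNorm (exA θ) = 1 := by
  simp [frobNorm, exA, Fin.sum_univ_two]

variable {θ}

lemma add_ne_zero_of_cos_two_mul_ne_zero (hd : cos (2 * θ) ≠ 0) : c + s ≠ 0 :=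
  right_ne_zero_of_mul (cos_two_mul_eq_mul θ ▸ hd)

lemma ilsX_exA (hd : cos (2 * θ) ≠ 0) : ilsX (exA θ) exJ exb = ![1 / (c + s)] := by
  have hcs := add_ne_zero_of_cos_two_mul_ne_zero hd
  ext i
  fin_cases i
  rw [ilsX, exA_pinv]
  simp [exb, Matrix.mulVec, dotProduct, Fin.sum_univ_two]
  field_simp
  rw [cos_two_mul_eq_mul]
  ring

lemma ilsR_exA (hd : cos (2 * θ) ≠ 0) : ilsR (exA θ) exJ exb = ![s / (c + s), c / (c + s)] := by
  have hcs := add_ne_zero_of_cos_two_mul_ne_zero hd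
  ext i
  fin_cases i <;>
  · rw [ilsR, ilsX_exA hd]
    simp [exA, exb]
    field_simp
    ring

lemma ilsM1_sub_ilsM2_exA (hd : cos (2 * θ) ≠ 0) :
    ilsM1 (exA θ) exJ exb - ilsM2 (exA θ) exJ exb =
      Matrix.replicateRow (Fin 1) fun _ => -((c + s) ^ 2)⁻¹ := by
  have hcs := add_ne_zero_of_cos_two_mul_ne_zero hd
  ext i ⟨j, k⟩
  fin_cases i; fin_cases j; fin_cases k <;>
  · simp only [ilsM1, ilsM2, Matrix.sub_apply, Matrix.of_apply, Matrix.replicateRow_apply]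
    rw [exA_pinv, exA_gram, inv_of_fin_one, ilsR_exA hd, ilsX_exA hd]
    simp [exJ, Matrix.mulVec, dotProduct, Fin.sum_univ_two]
    field_simp
    rw [cos_two_mul_eq_mul]
    ring

end Example

/-- First example of the paper: for `θ = π/4 − α`, `AᵀJA = cos 2θ > 0`,
`x = 1/(cos θ + sin θ)`, `‖M₁ − M₂‖₂ = 2^{-1/2} sec² α`, and the condition
number `χ = (‖A‖_F/‖x‖₂)·‖M₁ − M₂‖₂` equals `sec α`. -/
theorem stmt_13 (α θ : ℝ) (hα : 0 < α) (hα' : α < Real.pi / 4)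
    (hθ : θ = Real.pi / 4 - α) :
    (exA θ)ᵀ * exJ * exA θ = !![Real.cos (2 * θ)] ∧
    0 < Real.cos (2 * θ) ∧
    ilsX (exA θ) exJ exb = ![1 / (Real.cos θ + Real.sin θ)] ∧
    specNorm (ilsM1 (exA θ) exJ exb - ilsM2 (exA θ) exJ exb)
      = (Real.sqrt 2)⁻¹ * ((Real.cos α) ^ 2)⁻¹ ∧
    (frobNorm (exA θ) / eNorm (ilsX (exA θ) exJ exb))
        * specNorm (ilsM1 (exA θ) exJ exb - ilsM2 (exA θ) exJ exb)
      = (Real.cos α)⁻¹ := by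
  have hd : 0 < cos (2 * θ) := by
    rw [hθ, cos_two_mul_pi_div_four_sub]
    exact sin_pos_of_pos_of_lt_pi (by linarith) (by linarith [pi_pos])
  have hcos : 0 < cos α := cos_pos_of_mem_Ioo ⟨by linarith [pi_pos], by linarith [pi_pos]⟩
  have hcs : cos θ + sin θ = √2 * cos α := hθ ▸ cos_add_sin_pi_div_four_sub α
  have hspec : specNorm (ilsM1 (exA θ) exJ exb - ilsM2 (exA θ) exJ exb)
      = (√2)⁻¹ * (cos α ^ 2)⁻¹ := by
    rw [ilsM1_sub_ilsM2_exA hd.ne', specNorm_replicateRow, eNorm_const, abs_neg, hcs,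
      abs_of_pos (by positivity)]
    simp only [Fintype.card_prod, Fintype.card_fin]
    field_simp
    norm_num
  refine ⟨exA_gram θ, hd, ilsX_exA hd.ne', hspec, ?_⟩
  rw [hspec, frobNorm_exA θ, ilsX_exA hd.ne', eNorm_fin_one, hcs, abs_of_pos (by positivity)]
  field_simp
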